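/- arXiv:1603.06190 — 3 statements merged into one kernel-verified Lean document; each statement's English description precedes it below -/
import Mathlib

section
/- Let G be a finite group, let g ∈ G, and let k be a nonnegative integer. Then |G|^{2k-1} · Σ_{π ∈ Irr G} (dim π)^{1-2k} · χ_π(g) equals the number of tuples (x_1, y_1, …, x_k, y_k) ∈ G^{2k} such that [x_1,y_1]·[x_2,y_2]⋯[x_k,y_k] = g. -/
/-!
For an irreducible `π` of dimension `d`, Schur's lemma makes the averaged operators
`∑ₓ π(x a x⁻¹)` and `∑ᵧ χ(y) π(y⁻¹)` scalar, which gives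
`∑_{x,y} χ(⁅x, y⁆ b) = (|G|/d)² χ(b)`; by induction the sum of `χ(c⁻¹ g)` over all products
`c` of `k` commutators is `(|G|/d)^{2k} χ(g)`. Counting the solutions of `c = g` with the
column orthogonality relation `∑_π d_π χ_π(h) = |G| δ_{h,1}`, which comes from decomposing
the regular representation by Maschke's theorem, gives the formula.
-/

open CategoryTheory Module
open scoped commutatorElement

universe u

theorem LinearMap.trace_eq_trace_restrict_add_trace_restrict {K V : Type*} [Field K]
    [AddCommGroup V] [Module K V] [FiniteDimensional K V]
    {p q : Submodule K V} (hpq : IsCompl p q) (f : V →ₗ[K] V)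
    (hp : Set.MapsTo f p p) (hq : Set.MapsTo f q q) :
    trace K V f = trace K p (f.restrict hp) + trace K q (f.restrict hq) := by
  have hN : DirectSum.IsInternal fun b : Bool => cond b p q :=
    (DirectSum.isInternal_submodule_iff_isCompl _ (i := true) (j := false) (by simp)
      (by ext b; cases b <;> simp)).mpr hpq
  rw [trace_eq_sum_trace_restrict hN (fun b => by cases b <;> assumption), Fintype.sum_bool]
  rfl

theorem Subrepresentation.isCompl_toSubmodule {k G V : Type*} [Field k] [Group G]
    [AddCommGroup V] [Module k V] {ρ : Representation k G V} {σ τ : Subrepresentation ρ}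
    (h : IsCompl σ τ) : IsCompl σ.toSubmodule τ.toSubmodule :=
  ⟨disjoint_iff.mpr (congrArg toSubmodule (disjoint_iff.mp h.disjoint)),
    codisjoint_iff.mpr (congrArg toSubmodule (codisjoint_iff.mp h.codisjoint))⟩

namespace Representation

variable {k G V : Type*} [Field k] [Group G] [AddCommGroup V] [Module k V]

theorem character_eq_add_of_isCompl [FiniteDimensional k V] {ρ : Representation k G V}
    {σ τ : Subrepresentation ρ} (h : IsCompl σ τ) :
    ρ.character = σ.toRepresentation.character + τ.toRepresentation.character := by
  ext g
  exact LinearMap.trace_eq_trace_restrict_add_trace_restrict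
    (Subrepresentation.isCompl_toSubmodule h) (ρ g) (σ.apply_mem_toSubmodule g)
    (τ.apply_mem_toSubmodule g)

variable [Fintype G]

theorem character_ofMulAction_self [DecidableEq G] (g : G) :
    (ofMulAction k G G).character g = if g = 1 then (Fintype.card G : k) else 0 := by
  rw [character, LinearMap.trace_eq_matrix_trace k (MonoidAlgebra.basis G k), Matrix.trace]
  have hdiag : ∀ x : G, (LinearMap.toMatrix (MonoidAlgebra.basis G k) (MonoidAlgebra.basis G k)
      (ofMulAction k G G g)).diag x = if g = 1 then 1 else 0 := by
    intro x
    rw [Matrix.diag_apply, LinearMap.toMatrix_apply, MonoidAlgebra.basis_apply,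
      ofMulAction_single]
    show MonoidAlgebra.coeff (MonoidAlgebra.single (g * x) (1 : k)) x = _
    simp [MonoidAlgebra.coeff_single, Finsupp.single_apply]
  simp only [hdiag]
  split <;> simp

end Representation

namespace FDRep

section Schur

variable {k G : Type u} [Field k] [Group G]

theorem finrank_pos_of_simple (X : FDRep k G) [Simple X] : 0 < finrank k X := by
  by_contra h
  have : Subsingleton X := finrank_zero_iff.mp (Nat.eq_zero_of_not_pos h)
  exact id_nonzero X (by ext; exact Subsingleton.elim _ _)

variable [IsAlgClosed k]

theorem finrank_mul_trace_mul_ρ_of_commute (X : FDRep k G) [Simple X]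
    {T : Module.End k X} (hT : ∀ g, Commute T (X.ρ g)) (b : G) :
    finrank k X * LinearMap.trace k X (T * X.ρ b) = LinearMap.trace k X T * X.character b := by
  obtain ⟨c, hc⟩ := endomorphism_simple_eq_smul_id (𝕜 := k) (X := X)
    (⟨FGModuleCat.ofHom T, fun g => by ext v; exact LinearMap.congr_fun (hT g) v⟩ : X ⟶ X)
  have hcT : c • 1 = T := congrArg (fun f : X ⟶ X => f.hom.hom.hom) hc
  rw [← hcT, smul_mul_assoc, one_mul, map_smul, map_smul, LinearMap.trace_one]
  simp only [smul_eq_mul, character]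
  ring

variable [Fintype G]

theorem finrank_mul_sum_character_conj_mul (X : FDRep k G) [Simple X] (a b : G) :
    finrank k X * ∑ x, X.character (x * a * x⁻¹ * b) =
      Fintype.card G * X.character a * X.character b := by
  set T : Module.End k X := ∑ x, X.ρ (x * a * x⁻¹)
  have hT : ∀ g, Commute T (X.ρ g) := by
    intro g
    simp only [Commute, SemiconjBy, T, Finset.sum_mul, Finset.mul_sum, ← map_mul]
    refine Fintype.sum_equiv (Equiv.mulLeft g⁻¹) _ _ (fun x => ?_)
    simp only [Equiv.coe_mulLeft]
    congr 1
    group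
  have htrT : LinearMap.trace k X T = Fintype.card G * X.character a := by
    rw [map_sum]
    change ∑ x, X.character (x * a * x⁻¹) = _
    simp [char_conj]
  calc finrank k X * ∑ x, X.character (x * a * x⁻¹ * b)
      = finrank k X * LinearMap.trace k X (T * X.ρ b) := by
        simp [T, Finset.sum_mul, map_sum, ← map_mul, character]
    _ = _ := by rw [finrank_mul_trace_mul_ρ_of_commute X hT, htrT]

variable [CharZero k]

open scoped Classical in
theorem sum_character_mul_character_inv (X Y : FDRep k G) [Simple X] [Simple Y] :
    ∑ g, X.character g * Y.character g⁻¹ =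
      if Nonempty (X ≅ Y) then (Fintype.card G : k) else 0 := by
  have := invertibleOfNonzero (NeZero.ne (Nat.card G : k))
  rw [← mul_inv_cancel_left₀ (NeZero.ne (Nat.card G : k)) (∑ g, _), char_orthonormal,
    Nat.card_eq_fintype_card]
  split_ifs <;> simp

theorem finrank_mul_sum_character_mul_character_inv_mul (X : FDRep k G) [Simple X] (b : G) :
    finrank k X * ∑ y, X.character y * X.character (y⁻¹ * b) =
      Fintype.card G * X.character b := by
  set S : Module.End k X := ∑ y, X.character y • X.ρ y⁻¹
  have hS : ∀ g, Commute S (X.ρ g) := by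
    intro g
    simp only [Commute, SemiconjBy, S, Finset.sum_mul, Finset.mul_sum, smul_mul_assoc,
      mul_smul_comm, ← map_mul]
    refine Fintype.sum_equiv (MulAut.conj g⁻¹).toEquiv _ _ (fun y => ?_)
    simp only [MulEquiv.toEquiv_eq_coe, MulEquiv.coe_toEquiv, MulAut.conj_apply]
    rw [char_conj]
    congr 2
    group
  have htrS : LinearMap.trace k X S = Fintype.card G := by
    have := sum_character_mul_character_inv X X
    rw [if_pos ⟨Iso.refl X⟩] at this
    rw [← this, map_sum]
    simp only [map_smul, smul_eq_mul]
    rfl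
  calc finrank k X * ∑ y, X.character y * X.character (y⁻¹ * b)
      = finrank k X * LinearMap.trace k X (S * X.ρ b) := by
        simp [S, Finset.sum_mul, map_sum, ← map_mul, character]
    _ = _ := by rw [finrank_mul_trace_mul_ρ_of_commute X hS, htrS]

theorem finrank_sq_mul_sum_character_commutator_mul (X : FDRep k G) [Simple X] (b : G) :
    finrank k X ^ 2 * ∑ p : G × G, X.character (⁅p.1, p.2⁆ * b) =
      Fintype.card G ^ 2 * X.character b := by
  have hconj (y : G) : finrank k X * ∑ x : G, X.character (⁅x, y⁆ * b) =
      Fintype.card G * (X.character y * X.character (y⁻¹ * b)) := by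
    simpa only [commutatorElement_def, mul_assoc] using
      finrank_mul_sum_character_conj_mul X y (y⁻¹ * b)
  calc finrank k X ^ 2 * ∑ p : G × G, X.character (⁅p.1, p.2⁆ * b)
      = finrank k X * ∑ y, finrank k X * ∑ x, X.character (⁅x, y⁆ * b) := by
        rw [Fintype.sum_prod_type_right, Finset.mul_sum, Finset.mul_sum]
        exact Finset.sum_congr rfl fun y _ => by ring
    _ = Fintype.card G * (finrank k X * ∑ y, X.character y * X.character (y⁻¹ * b)) := by
        simp only [hconj, ← Finset.mul_sum]
        ring
    _ = Fintype.card G ^ 2 * X.character b := by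
        rw [finrank_mul_sum_character_mul_character_inv_mul]
        ring

theorem finrank_pow_mul_sum_character_inv_prod_commutators_mul (X : FDRep k G) [Simple X]
    (n : ℕ) (b : G) :
    finrank k X ^ (2 * n) * ∑ v : Fin n → G × G,
        X.character ((List.ofFn fun i => ⁅(v i).1, (v i).2⁆).prod⁻¹ * b) =
      Fintype.card G ^ (2 * n) * X.character b := by
  induction n generalizing b with
  | zero => simp
  | succ n ih =>
    rw [← (Fin.consEquiv fun _ => G × G).sum_comp, Fintype.sum_prod_type]
    have hcons (p : G × G) (w : Fin n → G × G) :
        (List.ofFn fun i => ⁅(Fin.consEquiv (fun _ => G × G) (p, w) i).1,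
            (Fin.consEquiv (fun _ => G × G) (p, w) i).2⁆).prod⁻¹ * b =
          (List.ofFn fun i => ⁅(w i).1, (w i).2⁆).prod⁻¹ * (⁅p.2, p.1⁆ * b) := by
      simp [List.ofFn_succ, commutatorElement_inv, mul_assoc]
    have hswap : ∑ p : G × G, X.character (⁅p.2, p.1⁆ * b) =
        ∑ p : G × G, X.character (⁅p.1, p.2⁆ * b) :=
      (Equiv.prodComm G G).sum_comp (fun p => X.character (⁅p.1, p.2⁆ * b))
    simp only [hcons]
    calc _ = finrank k X ^ 2 * ∑ p : G × G, finrank k X ^ (2 * n) *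
            ∑ w : Fin n → G × G,
              X.character ((List.ofFn fun i => ⁅(w i).1, (w i).2⁆).prod⁻¹ * (⁅p.2, p.1⁆ * b)) := by
          rw [Finset.mul_sum, Finset.mul_sum]
          exact Finset.sum_congr rfl fun p _ => by ring
      _ = Fintype.card G ^ (2 * n) *
            (finrank k X ^ 2 * ∑ p : G × G, X.character (⁅p.1, p.2⁆ * b)) := by
          simp only [ih, ← Finset.mul_sum, hswap]
          ring
      _ = _ := by
          rw [finrank_sq_mul_sum_character_commutator_mul]
          ring

end Schur

section CompleteSystem

variable {k G : Type u} [Field k] [IsAlgClosed k] [CharZero k] [Group G] [Fintype G]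
  {ι : Type} [Fintype ι] (π : ι → FDRep k G)

theorem simple_of_isIrreducible {V : Type u} [AddCommGroup V] [Module k V]
    [FiniteDimensional k V] (ρ : Representation k G V) [ρ.IsIrreducible] :
    Simple (FDRep.of ρ) := by
  have := invertibleOfNonzero (NeZero.ne (Nat.card G : k))
  rw [simple_iff_char_is_norm_one]
  have h := Representation.char_orthonormal ρ ρ
  rw [if_pos ⟨Representation.Equiv.refl ρ⟩, inv_mul_eq_one₀ (NeZero.ne _)] at h
  exact h.symm

theorem exists_character_eq_sum_nsmul
    (hsurj : ∀ ρ : FDRep k G, Simple ρ → ∃ i, Nonempty (ρ ≅ π i))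
    {V : Type u} [AddCommGroup V] [Module k V] [FiniteDimensional k V]
    (ρ : Representation k G V) : ∃ m : ι → ℕ, ρ.character = ∑ i, m i • (π i).character := by
  induction hn : finrank k V using Nat.strong_induction_on generalizing V with
  | _ n ih =>
  rcases subsingleton_or_nontrivial V with hV | hV
  · exact ⟨0, by ext g; simp [Representation.character, Subsingleton.elim (ρ g) 0]⟩
  by_cases hirr : ρ.IsIrreducible
  · classical
    obtain ⟨i, ⟨e⟩⟩ := hsurj _ (simple_of_isIrreducible ρ)
    refine ⟨Pi.single i 1, ?_⟩
    simp only [Pi.single_apply, ite_smul, one_smul, zero_smul, Finset.sum_ite_eq',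
      Finset.mem_univ, if_true]
    exact char_iso e
  obtain ⟨σ, hσbot, hσtop⟩ : ∃ σ : Subrepresentation ρ, σ ≠ ⊥ ∧ σ ≠ ⊤ := by
    by_contra! h
    exact hirr
      { exists_pair_ne :=
          ⟨⊥, ⊤, fun h => bot_ne_top (congrArg Subrepresentation.toSubmodule h)⟩
        eq_bot_or_eq_top := fun σ => (em (σ = ⊥)).imp_right (h σ) }
  -- Maschke's theorem makes `Subrepresentation ρ` a complemented lattice.
  obtain ⟨τ, hστ⟩ := exists_isCompl σ
  have hτtop : τ ≠ ⊤ := fun h => hσbot (eq_bot_of_isCompl_top (h ▸ hστ))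
  obtain ⟨m₁, hm₁⟩ := ih _ (hn ▸ Submodule.finrank_lt
    (fun h => hσtop (Subrepresentation.toSubmodule_injective h))) σ.toRepresentation rfl
  obtain ⟨m₂, hm₂⟩ := ih _ (hn ▸ Submodule.finrank_lt
    (fun h => hτtop (Subrepresentation.toSubmodule_injective h))) τ.toRepresentation rfl
  refine ⟨m₁ + m₂, ?_⟩
  rw [Representation.character_eq_add_of_isCompl hστ, hm₁, hm₂, ← Finset.sum_add_distrib]
  simp only [Pi.add_apply, add_smul]

variable (hsimple : ∀ i, Simple (π i)) (hinj : ∀ i j, Nonempty (π i ≅ π j) → i = j)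
include hsimple hinj

theorem sum_sum_mul_character_mul_character_inv (c : ι → k) (i : ι) :
    ∑ g, (∑ j, c j * (π j).character g) * (π i).character g⁻¹ = c i * Fintype.card G := by
  classical
  have : ∀ j, Simple (π j) := hsimple
  simp only [Finset.sum_mul, mul_assoc]
  rw [Finset.sum_comm]
  simp only [← Finset.mul_sum, sum_character_mul_character_inv]
  have hiso (j : ι) : Nonempty (π j ≅ π i) ↔ j = i :=
    ⟨hinj j i, fun h => h ▸ ⟨Iso.refl _⟩⟩
  simp [hiso]

variable (hsurj : ∀ ρ : FDRep k G, Simple ρ → ∃ i, Nonempty (ρ ≅ π i))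
include hsurj

theorem sum_finrank_mul_character [DecidableEq G] (g : G) :
    ∑ i, (finrank k (π i) : k) * (π i).character g =
      if g = 1 then (Fintype.card G : k) else 0 := by
  obtain ⟨m, hm⟩ := exists_character_eq_sum_nsmul π hsurj (Representation.ofMulAction k G G)
  have hreg (g : G) : ∑ j, (m j : k) * (π j).character g =
      if g = 1 then (Fintype.card G : k) else 0 := by
    rw [← Representation.character_ofMulAction_self, hm]
    simp [Finset.sum_apply, nsmul_eq_mul]
  have hmult (i : ι) : (m i : k) = finrank k (π i) := by
    have h := sum_sum_mul_character_mul_character_inv π hsimple hinj (fun j => (m j : k)) i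
    simp only [hreg, ite_mul, zero_mul, Finset.sum_ite_eq', Finset.mem_univ, if_true, inv_one,
      char_one] at h
    exact (mul_left_cancel₀ (Nat.cast_ne_zero.mpr Fintype.card_ne_zero)
      (h.trans (mul_comm _ _))).symm
  simp only [← hmult, hreg]

theorem card_mul_natCard_fiber_eq {α : Type*} [Fintype α] (f : α → G) (g : G) :
    (Fintype.card G : k) * Nat.card {a // f a = g} =
      ∑ i, (finrank k (π i) : k) * ∑ a, (π i).character ((f a)⁻¹ * g) := by
  classical
  simp only [Finset.mul_sum]
  rw [Finset.sum_comm]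
  simp only [sum_finrank_mul_character π hsimple hinj hsurj, inv_mul_eq_one]
  simp [Finset.sum_ite, Nat.card_eq_fintype_card, Fintype.card_subtype, mul_comm]

end CompleteSystem

end FDRep

/-- **Frobenius' formula with a fixed value** (Theorem 1.2). For a finite group `G`, `g ∈ G`
and a genus `k`, `|G|^{2k-1} · Σ_{π ∈ Irr G} (dim π)^{1-2k} · χ_π(g)` equals the number of
`2k`-tuples `(x₁,y₁,…,x_k,y_k)` in `G` with `[x₁,y₁]⋯[x_k,y_k] = g`. -/
theorem stmt_1 {G : Type} [Group G] [Fintype G]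
    {ι : Type} [Fintype ι] (π : ι → FDRep ℂ G)
    (hsimple : ∀ i, Simple (π i))
    (hinj : ∀ i j, Nonempty (π i ≅ π j) → i = j)
    (hsurj : ∀ ρ : FDRep ℂ G, Simple ρ → ∃ i, Nonempty (ρ ≅ π i))
    (g : G) (k : ℕ) :
    (Fintype.card G : ℂ) ^ (2 * (k : ℤ) - 1) *
      ∑ i, (finrank ℂ (π i) : ℂ) ^ (1 - 2 * (k : ℤ)) * (π i).character g =
    Nat.card {v : Fin k → G × G //
      (List.ofFn fun i => ⁅(v i).1, (v i).2⁆).prod = g} := by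
  have hG : (Fintype.card G : ℂ) ≠ 0 := Nat.cast_ne_zero.mpr Fintype.card_ne_zero
  apply mul_left_cancel₀ hG
  rw [FDRep.card_mul_natCard_fiber_eq π hsimple hinj hsurj, ← mul_assoc, Finset.mul_sum]
  refine Finset.sum_congr rfl fun i _ => ?_
  have := hsimple i
  have hd : (finrank ℂ (π i) : ℂ) ≠ 0 :=
    Nat.cast_ne_zero.mpr (FDRep.finrank_pos_of_simple _).ne'
  have h := FDRep.finrank_pow_mul_sum_character_inv_prod_commutators_mul (π i) k g
  have hk : 2 * (k : ℤ) = (2 * k : ℕ) := by push_cast; ring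
  rw [hk, zpow_sub₀ hG, zpow_sub₀ hd, zpow_natCast, zpow_natCast, zpow_one, zpow_one]
  field_simp
  exact h.symm
end

section
/- Let G be a finite group acting on a finite set X, and suppose on the set of pairs (k,m) of nonnegative integers with m ≥ 1 we define V(k,m) := |G|^{2k+m-2} · Σ_{π ∈ Irr G} (dim Hom_G(π, ℂ[X]))^m / (dim π)^{2k+m-2} (the groupoid volume of the moduli of X-framed representations for a genus-k surface with m punctures). Then the following are equivalent: (i) X is a multiplicity free G-set; (ii) for all pairs (k_1,m_1) and (k_2,m_2) with m_1, m_2 ≥ 1 and 2k_1+m_1 = 2k_2+m_2, one has V(k_1,m_1) = V(k_2,m_2); (iii) there exist two distinct pairs (k_1,m_1) ≠ (k_2,m_2) with m_1, m_2 ≥ 1 and 2k_1+m_1 = 2k_2+m_2 such that V(k_1,m_1) = V(k_2,m_2). -/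
open CategoryTheory Module

/-- The permutation representation of `G` on complex-valued functions on a `G`-set `X`. -/
noncomputable def permRep (G X : Type) [Group G] [MulAction G X] :
    Representation ℂ G (X → ℂ) where
  toFun g :=
    { toFun := fun f x => f (g⁻¹ • x)
      map_add' := fun _ _ => rfl
      map_smul' := fun _ _ => rfl }
  map_one' := by ext f x; simp
  map_mul' := by intro g h; ext f x; simp [mul_smul]

/-- The permutation representation `ℂ[X]` as a finite-dimensional representation. -/
noncomputable def permFDRep (G X : Type) [Group G] [MulAction G X] [Fintype X] :
    FDRep ℂ G :=
  FDRep.of (permRep G X)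

private lemma aux_sum_eq {ι : Type} [Fintype ι] (a d : ι → ℕ) (hd : ∀ i, 1 ≤ d i)
    (e : ℤ) (m M : ℕ) (hm : 1 ≤ m) (hmM : m < M)
    (h : ∑ i, (a i : ℂ) ^ m / (d i : ℂ) ^ e = ∑ i, (a i : ℂ) ^ M / (d i : ℂ) ^ e) :
    ∀ i, a i ≤ 1 := by
  have key : ∑ i, ((a i : ℝ) ^ M - (a i : ℝ) ^ m) / (d i : ℝ) ^ e = 0 := by
    have hc : ((∑ i, ((a i : ℝ) ^ M - (a i : ℝ) ^ m) / (d i : ℝ) ^ e : ℝ) : ℂ)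
        = ∑ i, ((a i : ℂ) ^ M / (d i : ℂ) ^ e - (a i : ℂ) ^ m / (d i : ℂ) ^ e) := by
      push_cast
      exact Finset.sum_congr rfl fun i _ => by ring
    have hz : ∑ i, ((a i : ℂ) ^ M / (d i : ℂ) ^ e - (a i : ℂ) ^ m / (d i : ℂ) ^ e) = 0 := by
      rw [Finset.sum_sub_distrib, ← h, sub_self]
    exact_mod_cast hc.trans hz
  have hnonneg : ∀ i ∈ Finset.univ, 0 ≤ ((a i : ℝ) ^ M - (a i : ℝ) ^ m) / (d i : ℝ) ^ e := by
    intro i _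
    apply div_nonneg _ (zpow_nonneg (by positivity) e)
    rw [sub_nonneg]
    rcases Nat.eq_zero_or_pos (a i) with h0 | h1
    · simp [h0, zero_pow (by omega : m ≠ 0), zero_pow (by omega : M ≠ 0)]
    · exact pow_le_pow_right₀ (by exact_mod_cast h1) hmM.le
  intro i
  have hzero := (Finset.sum_eq_zero_iff_of_nonneg hnonneg).mp key i (Finset.mem_univ i)
  have hdpos : (0:ℝ) < (d i : ℝ) ^ e := zpow_pos (by exact_mod_cast hd i) e
  have heq : (a i : ℝ) ^ M = (a i : ℝ) ^ m := by
    have := (div_eq_zero_iff.mp hzero).resolve_right (ne_of_gt hdpos)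
    linarith [sub_eq_zero.mp this]
  by_contra hgt
  have h2 : (1:ℝ) < (a i : ℝ) := by exact_mod_cast Nat.lt_of_lt_of_le Nat.one_lt_two (by omega)
  exact absurd heq (ne_of_gt (pow_lt_pow_right₀ h2 hmM))

/-- **Multiplicity-freeness via volumes of Fock–Goncharov spaces** (Corollary 5.2).
With `V(k,m)` the groupoid volume of the moduli of `X`-framed representations for a genus-`k`
surface with `m ≥ 1` punctures, the following are equivalent: `X` is multiplicity free;
`V` depends only on `2k+m` (equivalently, on the Euler characteristic); and `V` takes equal
values at two distinct pairs with the same `2k+m`. -/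
theorem stmt_7 {G X : Type} [Group G] [Fintype G] [MulAction G X] [Fintype X]
    {ι : Type} [Fintype ι] (π : ι → FDRep ℂ G)
    (hsimple : ∀ i, Simple (π i))
    (hinj : ∀ i j, Nonempty (π i ≅ π j) → i = j)
    (hsurj : ∀ ρ : FDRep ℂ G, Simple ρ → ∃ i, Nonempty (ρ ≅ π i))
    (V : ℕ → ℕ → ℂ)
    (hV : ∀ k m : ℕ, 1 ≤ m → V k m =
      (Fintype.card G : ℂ) ^ (2 * (k : ℤ) + m - 2) *
        ∑ i, (finrank ℂ (π i ⟶ permFDRep G X) : ℂ) ^ m /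
          (finrank ℂ (π i) : ℂ) ^ (2 * (k : ℤ) + m - 2)) :
    List.TFAE
      [∀ ρ : FDRep ℂ G, Simple ρ → finrank ℂ (ρ ⟶ permFDRep G X) ≤ 1,
       ∀ k₁ m₁ k₂ m₂ : ℕ, 1 ≤ m₁ → 1 ≤ m₂ → 2 * k₁ + m₁ = 2 * k₂ + m₂ →
         V k₁ m₁ = V k₂ m₂,
       ∃ k₁ m₁ k₂ m₂ : ℕ, 1 ≤ m₁ ∧ 1 ≤ m₂ ∧ (k₁, m₁) ≠ (k₂, m₂) ∧
         2 * k₁ + m₁ = 2 * k₂ + m₂ ∧ V k₁ m₁ = V k₂ m₂] := by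
  set Y := permFDRep G X with hY
  have hd : ∀ i, 1 ≤ finrank ℂ (π i) := by
    intro i
    have := hsimple i
    by_contra h
    have h0 : finrank ℂ (π i) = 0 := by omega
    have hz : ∀ x : (π i), x = 0 := finrank_zero_iff_forall_zero.mp h0
    exact id_nonzero (π i) (by ext x; simp [hz])
  tfae_have 1 → 2 := by
    intro h1 k₁ m₁ k₂ m₂ hm₁ hm₂ hsum
    have ha : ∀ i (m : ℕ), 1 ≤ m → (finrank ℂ (π i ⟶ Y) : ℂ) ^ m = (finrank ℂ (π i ⟶ Y) : ℂ) := by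
      intro i m hm
      rcases Nat.le_one_iff_eq_zero_or_eq_one.mp (h1 (π i) (hsimple i)) with h | h
      · simp [h, zero_pow (by omega : m ≠ 0)]
      · simp [h]
    have hexp : 2 * (k₂:ℤ) + m₂ - 2 = 2 * (k₁:ℤ) + m₁ - 2 := by
      have : (2 * k₁ + m₁ : ℤ) = 2 * k₂ + m₂ := by exact_mod_cast hsum
      omega
    rw [hV k₁ m₁ hm₁, hV k₂ m₂ hm₂, hexp]
    congr 1
    exact Finset.sum_congr rfl fun i _ => by rw [ha i m₁ hm₁, ha i m₂ hm₂]
  tfae_have 2 → 3 := by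
    intro h2
    exact ⟨1, 1, 0, 3, le_refl 1, by norm_num, by decide, by norm_num,
      h2 1 1 0 3 (le_refl 1) (by norm_num) (by norm_num)⟩
  tfae_have 3 → 1 := by
    intro h3
    obtain ⟨k₁, m₁, k₂, m₂, hm₁, hm₂, hne, hsum, hVeq⟩ := h3
    have hcard : (Fintype.card G : ℂ) ^ (2 * (k₁:ℤ) + m₁ - 2) ≠ 0 :=
      zpow_ne_zero _ (by exact_mod_cast Fintype.card_ne_zero)
    have hexp : 2 * (k₂:ℤ) + m₂ - 2 = 2 * (k₁:ℤ) + m₁ - 2 := by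
      have : (2 * k₁ + m₁ : ℤ) = 2 * k₂ + m₂ := by exact_mod_cast hsum
      omega
    rw [hV k₁ m₁ hm₁, hV k₂ m₂ hm₂, hexp] at hVeq
    have hsums := mul_left_cancel₀ hcard hVeq
    have hmne : m₁ ≠ m₂ := by
      intro h; apply hne; have : k₁ = k₂ := by omega
      simp [this, h]
    have hale : ∀ i, finrank ℂ (π i ⟶ Y) ≤ 1 := by
      rcases lt_or_gt_of_ne hmne with h | h
      · exact aux_sum_eq _ _ hd _ m₁ m₂ hm₁ h hsums
      · exact aux_sum_eq _ _ hd _ m₂ m₁ hm₂ h hsums.symm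
    intro ρ hρ
    obtain ⟨i, ⟨e⟩⟩ := hsurj ρ hρ
    rw [LinearEquiv.finrank_eq (Linear.homCongr ℂ e (Iso.refl Y))]
    exact hale i
  tfae_finish
end

section
/- Let G be a finite group acting on a finite set X, let π be a complex representation of G, and for x ∈ X let L_π^x : Hom_G(π, ℂ[X]) → π* denote the linear map sending φ to the functional u ↦ φ(u)(x). Then for all x, y ∈ X, Tr(L_π^x ∘ (L_{π*}^y)ᵗ) = (1/|G|) · Σ_{h ∈ G : h·x = y} χ_π(h) = χ_π^X(x,y), where the trace is of the composite L_π^x ∘ (L_{π*}^y)ᵗ : π* → π*, (L_{π*}^y)ᵗ : π → Hom_G(π*, ℂ[X])* is the transpose of L_{π*}^y, and Hom_G(π*, ℂ[X])* is identified with Hom_G(π, ℂ[X]) via the pairing ⟨φ,ψ⟩ := Σ_{x ∈ X} ⟨L_π^x φ, L_{π*}^x ψ⟩. In other words, the spherical character of the identity endomorphism of Hom_G(π, ℂ[X]) equals χ_π^X. -/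
open CategoryTheory Module

/-- The space `Hom_G(σ, ℂ[X])` of `G`-equivariant linear maps from a representation `σ`
to the permutation representation on functions on `X`, as a submodule of all linear maps. -/
noncomputable def homG {G X : Type} [Group G] [MulAction G X] {W : Type} [AddCommGroup W] [Module ℂ W]
    (σ : Representation ℂ G W) : Submodule ℂ (W →ₗ[ℂ] (X → ℂ)) where
  carrier := {φ | ∀ g w, φ (σ g w) = permRep G X g (φ w)}
  add_mem' := by intro φ ψ hφ hψ g w; simp [hφ g w, hψ g w]
  zero_mem' := by intro g w; simp
  smul_mem' := by intro c φ hφ g w; simp [hφ g w]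

/-- The evaluation map `L_σ^x : Hom_G(σ, ℂ[X]) → σ*`, `φ ↦ (u ↦ φ(u)(x))`. -/
noncomputable def Lmap {G X : Type} [Group G] [MulAction G X] {W : Type} [AddCommGroup W]
    [Module ℂ W] (σ : Representation ℂ G W) (x : X) :
    homG (X := X) σ →ₗ[ℂ] Module.Dual ℂ W where
  toFun φ := (LinearMap.proj x).comp (φ : W →ₗ[ℂ] (X → ℂ))
  map_add' := by intro φ ψ; ext w; rfl
  map_smul' := by intro c φ; ext w; rfl

open scoped Classical in
/-- The equivariant map `Ψ_v : ρ* → ℂ[X]`, `f ↦ (z ↦ Σ_{g : g•x = z} f(ρ(g)v))`. -/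
noncomputable def Psi {G X : Type} [Group G] [Fintype G] [MulAction G X]
    {V : Type} [AddCommGroup V] [Module ℂ V] (ρ : Representation ℂ G V) (x : X) (v : V) :
    homG (X := X) ρ.dual := by
  refine ⟨{ toFun := fun f z => ∑ g : G, if g • x = z then f (ρ g v) else 0
            map_add' := ?_
            map_smul' := ?_ }, ?_⟩
  · intro f₁ f₂
    funext z
    simp only [LinearMap.add_apply, Pi.add_apply]
    rw [← Finset.sum_add_distrib]
    refine Finset.sum_congr rfl fun g _ => ?_
    split <;> simp
  · intro c f
    funext z
    simp only [LinearMap.smul_apply, RingHom.id_apply, Pi.smul_apply, smul_eq_mul,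
      Finset.mul_sum]
    refine Finset.sum_congr rfl fun g _ => ?_
    split <;> simp
  · intro h f
    funext z
    simp only [LinearMap.coe_mk, AddHom.coe_mk, permRep, Representation.dual_apply,
      Module.Dual.transpose_apply, LinearMap.comp_apply]
    refine Fintype.sum_equiv (Equiv.mulLeft h⁻¹) _ _ fun g => ?_
    have hcond : (h⁻¹ * g) • x = h⁻¹ • z ↔ g • x = z := by
      rw [mul_smul]
      exact smul_left_cancel_iff h⁻¹
    simp only [Equiv.coe_mulLeft, hcond, map_mul, Module.End.mul_apply]

open scoped Classical in
/-- **Lemma B.2**: the spherical character of the identity endomorphism of `Hom_G(π,ℂ[X])`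
equals `χ_π^X`. Concretely, if `T : π* → Hom_G(π,ℂ[X])` is the transpose `(L_{π*}^y)ᵗ` of
`L_{π*}^y` under the identification of `Hom_G(π*,ℂ[X])*` with `Hom_G(π,ℂ[X])` via the pairing
`⟨φ,ψ⟩ = Σ_z ⟨L_π^z φ, L_{π*}^z ψ⟩` (this is the hypothesis `hT`), then
`Tr(L_π^x ∘ T) = (1/|G|) Σ_{h : h•x = y} χ_π(h) = χ_π^X(x,y)`. -/
theorem stmt_11 {G X : Type} [Group G] [Fintype G] [MulAction G X] [Fintype X]
    {V : Type} [AddCommGroup V] [Module ℂ V] [FiniteDimensional ℂ V]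
    (ρ : Representation ℂ G V) (x y : X)
    (T : Module.Dual ℂ V →ₗ[ℂ] homG (X := X) ρ)
    (hT : ∀ (f : Module.Dual ℂ V) (ψ : homG (X := X) ρ.dual),
      (∑ z : X, Lmap ρ.dual z ψ (Lmap ρ z (T f))) = Lmap ρ.dual y ψ f) :
    LinearMap.trace ℂ (Module.Dual ℂ V) ((Lmap ρ x).comp T) =
      (Fintype.card G : ℂ)⁻¹ *
        ∑ h : G, if h • x = y then LinearMap.trace ℂ V (ρ h) else 0 := by
  have hcard : (Fintype.card G : ℂ) ≠ 0 := Nat.cast_ne_zero.mpr Fintype.card_ne_zero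
  have key : ∀ (f : Module.Dual ℂ V) (v : V),
      (Fintype.card G : ℂ) * ((T f : V →ₗ[ℂ] (X → ℂ)) v x) =
        ∑ g : G, if g • x = y then f (ρ g v) else 0 := by
    intro f v
    have h := hT f (Psi (X := X) ρ x v)
    have hL : ∀ (z : X) (ψ : homG (X := X) ρ.dual) (F : Module.Dual ℂ V),
        Lmap ρ.dual z ψ F = (ψ : Module.Dual ℂ V →ₗ[ℂ] (X → ℂ)) F z := fun _ _ _ => rfl
    have hL' : ∀ (z : X) (φ : homG (X := X) ρ), ∀ w : V,
        Lmap ρ z φ w = (φ : V →ₗ[ℂ] (X → ℂ)) w z := fun _ _ _ => rfl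
    -- rewrite the LHS of hT
    have lhs : (∑ z : X, Lmap ρ.dual z (Psi (X := X) ρ x v) (Lmap ρ z (T f))) =
        (Fintype.card G : ℂ) * ((T f : V →ₗ[ℂ] (X → ℂ)) v x) := by
      have step1 : ∀ z : X, Lmap ρ.dual z (Psi (X := X) ρ x v) (Lmap ρ z (T f)) =
          ∑ g : G, if g • x = z then (T f : V →ₗ[ℂ] (X → ℂ)) (ρ g v) z else 0 := by
        intro z
        rw [hL]
        show (∑ g : G, if g • x = z then (Lmap ρ z (T f)) (ρ g v) else 0) = _
        refine Finset.sum_congr rfl fun g _ => ?_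
        rw [hL']
      rw [Finset.sum_congr rfl fun z _ => step1 z, Finset.sum_comm]
      have step2 : ∀ g : G,
          (∑ z : X, if g • x = z then (T f : V →ₗ[ℂ] (X → ℂ)) (ρ g v) z else 0) =
            (T f : V →ₗ[ℂ] (X → ℂ)) v x := by
        intro g
        rw [Finset.sum_ite_eq Finset.univ (g • x)
          (fun z => (T f : V →ₗ[ℂ] (X → ℂ)) (ρ g v) z)]
        simp only [Finset.mem_univ, if_true]
        have := (T f).2 g v
        rw [this]
        show (T f : V →ₗ[ℂ] (X → ℂ)) v (g⁻¹ • g • x) = _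
        rw [inv_smul_smul]
      rw [Finset.sum_congr rfl fun g _ => step2 g, Finset.sum_const, Finset.card_univ,
        nsmul_eq_mul]
    have rhs : Lmap ρ.dual y (Psi (X := X) ρ x v) f =
        ∑ g : G, if g • x = y then f (ρ g v) else 0 := rfl
    rw [lhs, rhs] at h
    exact h
  have hmap : (Lmap ρ x).comp T =
      (Fintype.card G : ℂ)⁻¹ • (∑ g : G, if g • x = y then (ρ g).dualMap else 0) := by
    ext f v
    have hk := key f v
    have : ((Lmap ρ x).comp T) f v = (T f : V →ₗ[ℂ] (X → ℂ)) v x := rfl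
    rw [this]
    have h2 : ((∑ g : G, if g • x = y then (ρ g).dualMap else 0) f) v =
        ∑ g : G, if g • x = y then f (ρ g v) else 0 := by
      simp only [LinearMap.sum_apply, LinearMap.coe_sum, Finset.sum_apply]
      refine Finset.sum_congr rfl fun g _ => ?_
      split <;> simp [LinearMap.dualMap_apply]
    simp only [LinearMap.smul_apply, smul_eq_mul, h2, ← hk]
    field_simp
  rw [hmap, map_smul, map_sum, smul_eq_mul]
  congr 1
  refine Finset.sum_congr rfl fun g _ => ?_
  split
  · rw [LinearMap.dualMap_def, LinearMap.trace_transpose']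
  · exact map_zero _
end
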